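/- arXiv:2511.16080 — 5 statements merged into one kernel-verified Lean document; each statement's English description precedes it below -/
import Mathlib

section
/- Every partial shape on a finite dimension space is a finite set of resolutions; consequently, there is no infinite strictly increasing sequence of partial shapes where each step adds one resolution (termination). -/
open Classical

/-- The (principal) dependency space of a dimension: all strict ancestors. -/
def dep {D : Type} (prec : D → D → Prop) (d : D) : Set D := {e | prec e d}

/-- Restriction of a partial function (modeled via `Option`) to a set. -/
noncomputable def restrict {D : Type} (c : D → Option ℕ) (S : Set D) : D → Option ℕ :=
  fun e => if e ∈ S then c e else none

/-- Domain of a partial function. -/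
def pdom {D : Type} (c : D → Option ℕ) : Set D := {e | c e ≠ none}

/-- A resolution map sends pairs `(d, c)` with `c` total exactly on `dep d` to lengths. -/
def ResMapOk {D : Type} (prec : D → D → Prop) (R : D → (D → Option ℕ) → Option ℕ) : Prop :=
  ∀ d c, R d c ≠ none → pdom c = dep prec d

/-- The in-bounds condition `ib(R; c)`. -/
def ib {D : Type} (prec : D → D → Prop) (R : D → (D → Option ℕ) → Option ℕ)
    (c : D → Option ℕ) : Prop :=
  ∀ d v, c d = some v → ∃ ℓ, R d (restrict c (dep prec d)) = some ℓ ∧ v < ℓ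

/-- A partial shape: every resolution present is in-bounds. -/
def IsPartialShape {D : Type} (prec : D → D → Prop)
    (R : D → (D → Option ℕ) → Option ℕ) : Prop :=
  ResMapOk prec R ∧ ∀ d c, R d c ≠ none → ib prec R c

/-- A (complete) shape: membership in the domain is equivalent to in-boundedness. -/
def IsShape {D : Type} (prec : D → D → Prop)
    (R : D → (D → Option ℕ) → Option ℕ) : Prop :=
  ResMapOk prec R ∧ ∀ d c, pdom c = dep prec d → (R d c ≠ none ↔ ib prec R c)

/-- Compatibility of a pair `(d, c)` with a partial shape. -/
def compat {D : Type} (prec : D → D → Prop) (R : D → (D → Option ℕ) → Option ℕ)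
    (d : D) (c : D → Option ℕ) : Prop :=
  pdom c = dep prec d ∧ ib prec R c ∧ R d c = none

/-- Extending a resolution map by one resolution `(d, c) ↦ ℓ`. -/
noncomputable def extend {D : Type} (R : D → (D → Option ℕ) → Option ℕ)
    (d : D) (c : D → Option ℕ) (ℓ : ℕ) : D → (D → Option ℕ) → Option ℕ :=
  fun d' c' => if d' = d ∧ c' = c then some ℓ else R d' c'

/-- Downward closedness of a set with respect to a relation. -/
def DownClosed {D : Type} (prec : D → D → Prop) (F : Set D) : Prop :=
  ∀ a b, prec a b → b ∈ F → a ∈ F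

/-- A coordinate with unknowns over a (downward closed) set `F`. -/
def CoordU {D : Type} (prec : D → D → Prop) (R : D → (D → Option ℕ) → Option ℕ)
    (F : Set D) (c : D → Option ℕ) : Prop :=
  pdom c ⊆ F ∧ ib prec R c ∧ ∀ e ∈ F, c e = none → R e (restrict c (dep prec e)) = none

lemma shape_dom_finite {D : Type} [Fintype D] (prec : D → D → Prop)
    [IsIrrefl D prec] [IsTrans D prec]
    (R : D → (D → Option ℕ) → Option ℕ) (hR : IsPartialShape prec R) :
    ∀ d, {c : D → Option ℕ | R d c ≠ none}.Finite := by
  have hwf : WellFounded prec := Finite.wellFounded_of_trans_of_irrefl prec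
  intro d
  induction d using hwf.induction with
  | _ d IH =>
    have hL : ∀ e, prec e d → {ℓ : ℕ | ∃ c', R e c' = some ℓ}.Finite := by
      intro e he
      have h2 := (IH e he).image (fun c' => (R e c').getD 0)
      refine h2.subset ?_
      rintro ℓ ⟨c', hc'⟩
      exact ⟨c', by simp [hc'], by simp [hc']⟩
    set T : D → Set (Option ℕ) := fun e =>
      if prec e d then
        insert none (Option.some '' {v | ∃ ℓ, (∃ c', R e c' = some ℓ) ∧ v < ℓ})
      else {none} with hT
    have hTfin : ∀ e, (T e).Finite := by
      intro e
      by_cases he : prec e d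
      · simp only [hT, if_pos he]
        refine (Set.Finite.insert _ (Set.Finite.image _ ?_))
        have hsub : {v | ∃ ℓ, (∃ c', R e c' = some ℓ) ∧ v < ℓ} ⊆
            ⋃ ℓ ∈ {ℓ : ℕ | ∃ c', R e c' = some ℓ}, Set.Iio ℓ := by
          rintro v ⟨ℓ, hℓ, hv⟩
          exact Set.mem_biUnion hℓ hv
        exact (Set.Finite.biUnion (hL e he) (fun _ _ => Set.finite_Iio _)).subset hsub
      · simp [hT, if_neg he]
    refine ((Set.Finite.pi (t := T) hTfin).subset ?_)
    intro c hc
    have hdom : pdom c = dep prec d := hR.1 d c hc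
    have hib : ib prec R c := hR.2 d c hc
    intro e _
    by_cases he : prec e d
    · have hmem : e ∈ pdom c := by rw [hdom]; exact he
      obtain ⟨v, hv⟩ : ∃ v, c e = some v := by
        cases h : c e with
        | none => exact absurd h hmem
        | some v => exact ⟨v, rfl⟩
      obtain ⟨ℓ, hℓ, hvℓ⟩ := hib e v hv
      simp only [hT, if_pos he]
      exact Set.mem_insert_of_mem _ ⟨v, ⟨ℓ, ⟨_, hℓ⟩, hvℓ⟩, hv.symm⟩
    · have hmem : e ∉ pdom c := by rw [hdom]; exact he
      have hce : c e = none := not_not.mp hmem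
      simp [hT, if_neg he, hce]

lemma shape_finite {D : Type} [Fintype D] (prec : D → D → Prop)
    [IsIrrefl D prec] [IsTrans D prec]
    (R : D → (D → Option ℕ) → Option ℕ) (hR : IsPartialShape prec R) :
    {p : D × (D → Option ℕ) × ℕ | R p.1 p.2.1 = some p.2.2}.Finite := by
  have hfin := shape_dom_finite prec R hR
  have hpairs : {p : D × (D → Option ℕ) | R p.1 p.2 ≠ none}.Finite := by
    have hsub : {p : D × (D → Option ℕ) | R p.1 p.2 ≠ none} ⊆
        ⋃ d ∈ (Set.univ : Set D), ({d} : Set D) ×ˢ {c | R d c ≠ none} := by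
      rintro ⟨d, c⟩ h
      exact Set.mem_biUnion (Set.mem_univ d) ⟨rfl, h⟩
    exact ((Set.finite_univ.biUnion
      (fun d _ => (Set.finite_singleton d).prod (hfin d)))).subset hsub
  have himg := hpairs.image (fun p => (p.1, p.2, (R p.1 p.2).getD 0))
  refine himg.subset ?_
  rintro ⟨d, c, ℓ⟩ h
  simp only [Set.mem_setOf_eq] at h
  exact ⟨(d, c), by simp [Set.mem_setOf_eq, h], by simp [h]⟩

/-- Termination: every partial shape has finitely many resolutions, and there is no
infinite sequence of partial shapes each obtained by adding one compatible resolution. -/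
theorem stmt6 {D : Type} [Fintype D] (prec : D → D → Prop)
    [IsIrrefl D prec] [IsTrans D prec] :
    (∀ R : D → (D → Option ℕ) → Option ℕ, IsPartialShape prec R →
      {p : D × (D → Option ℕ) × ℕ | R p.1 p.2.1 = some p.2.2}.Finite) ∧
    ¬ ∃ f : ℕ → (D → (D → Option ℕ) → Option ℕ),
        (∀ n, IsPartialShape prec (f n)) ∧
        (∀ n, ∃ d c ℓ, compat prec (f n) d c ∧ f (n + 1) = extend (f n) d c ℓ) := by
  constructor
  · exact fun R hR => shape_finite prec R hR
  · rintro ⟨f, hps, hstep⟩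
    choose d c ℓ hcompat hext using hstep
    -- monotonicity
    have hmono : ∀ n m, n ≤ m → ∀ a b v, f n a b = some v → f m a b = some v := by
      intro n m hnm
      induction m with
      | zero =>
        intro a b v h
        have : n = 0 := Nat.le_zero.mp hnm
        rwa [this] at h
      | succ m IHm =>
        intro a b v h
        rcases Nat.lt_or_ge n (m + 1) with hlt | hge
        · have h' : f m a b = some v := IHm (Nat.lt_succ_iff.mp hlt) a b v h
          rw [hext m]
          unfold extend
          split
          · rename_i heq
            obtain ⟨ha, hb⟩ := heq
            subst ha; subst hb
            rw [(hcompat m).2.2] at h'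
            exact absurd h' (by simp)
          · exact h'
        · have : n = m + 1 := Nat.le_antisymm hnm hge
          rwa [this] at h
    -- the limit
    set Rinf : D → (D → Option ℕ) → Option ℕ := fun a b =>
      if h : ∃ n, f n a b ≠ none then f h.choose a b else none with hRinf
    have hagree : ∀ n a b v, f n a b = some v → Rinf a b = some v := by
      intro n a b v h
      have hex : ∃ k, f k a b ≠ none := ⟨n, by simp [h]⟩
      have hch := hex.choose_spec
      obtain ⟨w, hw⟩ : ∃ w, f hex.choose a b = some w := by
        cases hc : f hex.choose a b with
        | none => exact absurd hc hch
        | some w => exact ⟨w, rfl⟩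
      have h1 : f (max n hex.choose) a b = some v := hmono n _ (le_max_left _ _) _ _ _ h
      have h2 : f (max n hex.choose) a b = some w := hmono _ _ (le_max_right _ _) _ _ _ hw
      rw [h1] at h2
      simp only [hRinf, dif_pos hex, hw]
      exact h2.symm
    have hRinf_none : ∀ a b, Rinf a b ≠ none → ∃ n, f n a b ≠ none := by
      intro a b h
      by_contra hc
      push_neg at hc
      have : Rinf a b = none := by
        simp only [hRinf]
        rw [dif_neg]
        rintro ⟨n, hn⟩
        exact hn (hc n)
      exact h this
    have hshape : IsPartialShape prec Rinf := by
      constructor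
      · intro a b h
        obtain ⟨n, hn⟩ := hRinf_none a b h
        exact (hps n).1 a b hn
      · intro a b h
        obtain ⟨n, hn⟩ := hRinf_none a b h
        have hib := (hps n).2 a b hn
        intro e v hev
        obtain ⟨ℓ', hℓ', hvℓ'⟩ := hib e v hev
        exact ⟨ℓ', hagree n _ _ _ hℓ', hvℓ'⟩
    -- infinitely many resolutions in Rinf
    have hfin := shape_finite prec Rinf hshape
    have hadded : ∀ n, f (n + 1) (d n) (c n) = some (ℓ n) := by
      intro n
      rw [hext n]
      unfold extend
      simp
    have hinj : Function.Injective (fun n => ((d n, (c n, ℓ n)) : D × (D → Option ℕ) × ℕ)) := by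
      intro m n hmn
      by_contra hne
      rcases Nat.lt_or_ge m n with hlt | hge
      · have h1 : f n (d m) (c m) = some (ℓ m) := hmono (m + 1) n hlt _ _ _ (hadded m)
        have h2 : f n (d n) (c n) = none := (hcompat n).2.2
        simp only [Prod.mk.injEq] at hmn
        rw [hmn.1, hmn.2.1] at h1
        rw [h2] at h1
        exact absurd h1 (by simp)
      · have hlt : n < m := lt_of_le_of_ne hge (Ne.symm hne)
        have h1 : f m (d n) (c n) = some (ℓ n) := hmono (n + 1) m hlt _ _ _ (hadded n)
        have h2 : f m (d m) (c m) = none := (hcompat m).2.2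
        simp only [Prod.mk.injEq] at hmn
        rw [← hmn.1, ← hmn.2.1] at h1
        rw [h2] at h1
        exact absurd h1 (by simp)
    have hmemb : ∀ n, ((d n, (c n, ℓ n)) : D × (D → Option ℕ) × ℕ) ∈
        {p : D × (D → Option ℕ) × ℕ | Rinf p.1 p.2.1 = some p.2.2} := by
      intro n
      exact hagree (n + 1) _ _ _ (hadded n)
    exact (Set.infinite_of_injective_forall_mem hinj hmemb) hfin
end

section
/- The extended definition of coordinates with unknowns coincides with the original definition when the shape is complete: if R is a complete shape and F ⊆ D is downward closed, then every partial function c : F ⇀ ℕ satisfying (1) ib(R; c) and (2) for all d ∈ F \ dom(c), (d, c|dep(d)) ∉ dom(R), is in fact total on F. -/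
open Classical

/-- Over a complete shape, every coordinate-with-unknowns over a downward closed `F`
is in fact total on `F`. -/
theorem stmt8 {D : Type} [Fintype D] (prec : D → D → Prop)
    [IsIrrefl D prec] [IsTrans D prec]
    (R : D → (D → Option ℕ) → Option ℕ) (hR : IsShape prec R)
    (F : Set D) (hF : DownClosed prec F)
    (c : D → Option ℕ) (hsub : pdom c ⊆ F) (hib : ib prec R c)
    (hnone : ∀ d ∈ F, c d = none → R d (restrict c (dep prec d)) = none) :
    pdom c = F := by
  by_contra hne
  have hwf : WellFounded prec := Finite.wellFounded_of_trans_of_irrefl prec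
  have hex : ∃ d, d ∈ F ∧ c d = none := by
    by_contra h
    push_neg at h
    apply hne
    apply Set.Subset.antisymm hsub
    intro d hd
    exact h d hd
  obtain ⟨d, ⟨hdF, hdnone⟩, hmin⟩ := hwf.has_min {d | d ∈ F ∧ c d = none} hex
  have hdep : ∀ e, prec e d → ∃ v, c e = some v := by
    intro e he
    have heF : e ∈ F := hF e d he hdF
    cases hce : c e with
    | none => exact absurd he (hmin e ⟨heF, hce⟩)
    | some v => exact ⟨v, rfl⟩
  have hpdom : pdom (restrict c (dep prec d)) = dep prec d := by
    ext e
    simp only [pdom, restrict, Set.mem_setOf_eq, dep]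
    constructor
    · intro h
      by_contra hne'
      simp [hne'] at h
    · intro h
      obtain ⟨v, hv⟩ := hdep e h
      simp [h, hv]
  have hibres : ib prec R (restrict c (dep prec d)) := by
    intro e v hv
    have hed : e ∈ dep prec d := by
      by_contra h
      simp [restrict, h] at hv
    have hcv : c e = some v := by
      simpa [restrict, hed] using hv
    obtain ⟨ℓ, hℓ, hvℓ⟩ := hib e v hcv
    refine ⟨ℓ, ?_, hvℓ⟩
    have : restrict (restrict c (dep prec d)) (dep prec e) = restrict c (dep prec e) := by
      funext x
      simp only [restrict]
      by_cases hx : x ∈ dep prec e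
      · have : x ∈ dep prec d := _root_.trans (r := prec) hx hed
        simp [hx, this]
      · simp [hx]
    rw [this]
    exact hℓ
  have := (hR.2 d _ hpdom).mpr hibres
  exact this (hnone d hdF hdnone)
end

section
/- Coordinate explosion: let R̄ be a partial shape, F ⊆ D downward closed, d ∈ F, and c : dep(d) → ℕ compatible with R̄. Writing R̄_ℓ = R̄ ∪ {(d,c) ↦ ℓ} and U = {c' ∈ C(F; R̄) | c'|dep(d) = c}, the coordinate space over F with respect to R̄_ℓ equals (C(F; R̄) \ U) ∪ ⋃_{i=0}^{ℓ-1} {c' ∪ {d ↦ i} | c' ∈ U}. -/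
open Classical

/-!
Membership in `C(F; R)` is a condition on each dimension separately (`EntryOk`). If `c'` does not
restrict to `c` on `dep d`, the new resolution `(d, c)` is never queried and nothing changes. If
it does, only the check at `d` changes: the entry there must now be some `i < ℓ` instead of being
unset. Dimensions above `d` have no resolution under either map (a resolution there would need
`(d, c)` resolved), so both maps force them unset.
-/

open Function

section
variable {D : Type} {prec : D → D → Prop}

lemma restrict_congr {x y : D → Option ℕ} {S : Set D} (h : ∀ e ∈ S, x e = y e) :
    restrict x S = restrict y S :=
  funext fun e => by by_cases he : e ∈ S <;> simp [restrict, he, h]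

lemma restrict_restrict_of_subset (x : D → Option ℕ) {S T : Set D} (h : S ⊆ T) :
    restrict (restrict x T) S = restrict x S :=
  funext fun e => by
    by_cases he : e ∈ S
    · simp [restrict, he, h he]
    · simp [restrict, he]

lemma restrict_update_of_notMem (x : D → Option ℕ) {S : Set D} {d : D} (hd : d ∉ S)
    (v : Option ℕ) : restrict (update x d v) S = restrict x S :=
  restrict_congr fun _ he => update_of_ne (ne_of_mem_of_not_mem he hd) _ _

lemma notMem_dep_self [Std.Irrefl prec] (d : D) : d ∉ dep prec d := irrefl d

lemma dep_subset_dep [IsTrans D prec] {d e : D} (h : prec d e) : dep prec d ⊆ dep prec e :=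
  fun _ hx => _root_.trans hx h

variable {R : D → (D → Option ℕ) → Option ℕ} {d : D} {c : D → Option ℕ} {ℓ : ℕ}

lemma extend_apply_self : extend R d c ℓ d c = some ℓ := if_pos ⟨rfl, rfl⟩

lemma extend_apply_of_not {e : D} {x : D → Option ℕ} (h : ¬(e = d ∧ x = c)) :
    extend R d c ℓ e x = R e x := if_neg h

/-- Either `x d` is unset, and no resolution of `e` applies since resolutions are total on
`dep e ∋ d`; or it is set, and in-boundedness would need `(d, c)` to be resolved. -/
lemma IsPartialShape.apply_restrict_eq_none_of_prec [IsTrans D prec]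
    (hR : IsPartialShape prec R) (hdc : R d c = none) {x : D → Option ℕ}
    (hx : restrict x (dep prec d) = c) {e : D} (hde : prec d e) :
    R e (restrict x (dep prec e)) = none := by
  by_contra h
  have hd : d ∈ pdom (restrict x (dep prec e)) := by rw [hR.1 e _ h]; exact hde
  obtain ⟨v, hv⟩ := Option.ne_none_iff_exists'.mp hd
  obtain ⟨ℓ, hℓ, -⟩ := hR.2 e _ h d v hv
  rw [restrict_restrict_of_subset _ (dep_subset_dep hde), hx, hdc] at hℓ
  cases hℓ

/-- The condition `CoordU` imposes at a single dimension `e`, where `inF` is `e ∈ F`, `v` the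
entry `c' e` and `r` the resolution `R e (c'|dep e)`. -/
def EntryOk (inF : Prop) (v r : Option ℕ) : Prop :=
  (v ≠ none → inF) ∧ (∀ i, v = some i → ∃ ℓ, r = some ℓ ∧ i < ℓ) ∧ (inF → v = none → r = none)

lemma entryOk_none {p : Prop} {v : Option ℕ} : EntryOk p v none ↔ v = none := by
  cases v <;> simp [EntryOk]

lemma entryOk_some {p : Prop} (hp : p) {v : Option ℕ} :
    EntryOk p v (some ℓ) ↔ ∃ i < ℓ, v = some i := by
  cases v <;> simp [EntryOk, hp]

lemma coordU_iff_forall_entryOk {F : Set D} {x : D → Option ℕ} :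
    CoordU prec R F x ↔ ∀ e, EntryOk (e ∈ F) (x e) (R e (restrict x (dep prec e))) := by
  simp only [CoordU, ib, pdom, EntryOk, Set.subset_def, Set.mem_ofPred_eq, forall_and]

lemma coordU_extend_iff_of_restrict_ne {F : Set D} {x : D → Option ℕ}
    (hx : restrict x (dep prec d) ≠ c) :
    CoordU prec (extend R d c ℓ) F x ↔ CoordU prec R F x := by
  simp only [coordU_iff_forall_entryOk]
  refine forall_congr' fun e => ?_
  rw [extend_apply_of_not (by rintro ⟨rfl, h⟩; exact hx h)]

lemma IsPartialShape.extend_apply_restrict_eq [Std.Irrefl prec] [IsTrans D prec]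
    (hR : IsPartialShape prec R) (hdc : R d c = none) {x y : D → Option ℕ}
    (hy : restrict y (dep prec d) = c) (hxy : ∀ e ≠ d, x e = y e) {e : D} (he : e ≠ d) :
    extend R d c ℓ e (restrict x (dep prec e)) = R e (restrict y (dep prec e)) := by
  have hrestrict : ∀ S, d ∉ S → restrict x S = restrict y S :=
    fun S hS => restrict_congr fun e' he' => hxy e' (ne_of_mem_of_not_mem he' hS)
  rw [extend_apply_of_not fun h => he h.1]
  by_cases hde : prec d e
  · have hx : restrict x (dep prec d) = c := (hrestrict _ (notMem_dep_self d)).trans hy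
    rw [hR.apply_restrict_eq_none_of_prec hdc hx hde, hR.apply_restrict_eq_none_of_prec hdc hy hde]
  · rw [hrestrict _ hde]

lemma IsPartialShape.coordU_extend_iff [Std.Irrefl prec] [IsTrans D prec]
    (hR : IsPartialShape prec R) (hdc : R d c = none) {F : Set D} (hd : d ∈ F)
    {x : D → Option ℕ} (hx : restrict x (dep prec d) = c) :
    CoordU prec (extend R d c ℓ) F x ↔
      (∃ i < ℓ, x d = some i) ∧ CoordU prec R F (update x d none) := by
  have hy : restrict (update x d none) (dep prec d) = c := by
    rw [restrict_update_of_notMem _ (notMem_dep_self d), hx]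
  have hxy : ∀ e ≠ d, x e = update x d none e := fun e he => (update_of_ne he _ _).symm
  simp only [coordU_iff_forall_entryOk]
  constructor
  · intro h
    refine ⟨(entryOk_some hd).1 (by simpa only [hx, extend_apply_self] using h d), fun e => ?_⟩
    rcases eq_or_ne e d with rfl | he
    · rw [update_self, hy, hdc]
      exact entryOk_none.2 rfl
    · rw [← hR.extend_apply_restrict_eq hdc hy hxy he, ← hxy e he]
      exact h e
  · rintro ⟨hxd, h⟩ e
    rcases eq_or_ne e d with rfl | he
    · rw [hx, extend_apply_self]
      exact (entryOk_some hd).2 hxd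
    · rw [hR.extend_apply_restrict_eq hdc hy hxy he, hxy e he]
      exact h e

lemma IsPartialShape.coordU_extend_iff_exists_update [Std.Irrefl prec] [IsTrans D prec]
    (hR : IsPartialShape prec R) (hdc : R d c = none) {F : Set D} (hd : d ∈ F)
    {x : D → Option ℕ} (hx : restrict x (dep prec d) = c) :
    CoordU prec (extend R d c ℓ) F x ↔
      ∃ i < ℓ, ∃ y, (CoordU prec R F y ∧ restrict y (dep prec d) = c) ∧
        update y d (some i) = x := by
  rw [hR.coordU_extend_iff hdc hd hx]
  constructor
  · rintro ⟨⟨i, hi, hxd⟩, hy⟩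
    refine ⟨i, hi, update x d none, ⟨hy, ?_⟩, ?_⟩
    · rw [restrict_update_of_notMem _ (notMem_dep_self d), hx]
    · rw [update_idem, ← hxd, update_eq_self]
  · rintro ⟨i, hi, y, ⟨hy, hyc⟩, rfl⟩
    have hyd : y d = none := by
      have := coordU_iff_forall_entryOk.1 hy d
      rwa [hyc, hdc, entryOk_none] at this
    refine ⟨⟨i, hi, update_self ..⟩, ?_⟩
    rwa [update_idem, ← hyd, update_eq_self]

end

theorem stmt10_general {D : Type} (prec : D → D → Prop)
    [IsIrrefl D prec] [IsTrans D prec]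
    (R : D → (D → Option ℕ) → Option ℕ) (hR : IsPartialShape prec R)
    (F : Set D) (d : D) (hd : d ∈ F)
    (c : D → Option ℕ) (hc : compat prec R d c) (ℓ : ℕ) :
    {c' | CoordU prec (extend R d c ℓ) F c'} =
      ({c' | CoordU prec R F c'} \
        {c' | CoordU prec R F c' ∧ restrict c' (dep prec d) = c}) ∪
      ⋃ i ∈ Finset.range ℓ,
        (fun c' : D → Option ℕ => fun e => if e = d then some i else c' e) ''
          {c' | CoordU prec R F c' ∧ restrict c' (dep prec d) = c} := by
  have hexplode : ∀ (i : ℕ) (y : D → Option ℕ),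
      (fun e => if e = d then some i else y e) = update y d (some i) :=
    fun i y => funext fun e => (update_apply y d (some i) e).symm
  ext x
  simp only [Set.mem_ofPred_eq, Set.mem_union, Set.mem_sdiff, Set.mem_iUnion,
    Finset.mem_range, Set.mem_image, exists_prop, hexplode]
  by_cases hx : restrict x (dep prec d) = c
  · rw [hR.coordU_extend_iff_exists_update hc.2.2 hd hx]
    exact (or_iff_right fun h => h.2 ⟨h.1, hx⟩).symm
  · rw [coordU_extend_iff_of_restrict_ne hx]
    refine ⟨fun h => Or.inl ⟨h, fun hU => hx hU.2⟩, ?_⟩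
    rintro (⟨h, -⟩ | ⟨i, -, y, ⟨-, hy⟩, rfl⟩)
    · exact h
    · exact absurd ((restrict_update_of_notMem y (notMem_dep_self d) _).trans hy) hx

/-- Coordinate explosion: adding a compatible resolution `(d, c) ↦ ℓ` replaces the
coordinates matching `c` on `dep d` by their `ℓ` explosions along `d`. -/
theorem stmt10 {D : Type} [Fintype D] (prec : D → D → Prop)
    [IsIrrefl D prec] [IsTrans D prec]
    (R : D → (D → Option ℕ) → Option ℕ) (hR : IsPartialShape prec R)
    (F : Set D) (hF : DownClosed prec F) (d : D) (hd : d ∈ F)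
    (c : D → Option ℕ) (hc : compat prec R d c) (ℓ : ℕ) :
    {c' | CoordU prec (extend R d c ℓ) F c'} =
      ({c' | CoordU prec R F c'} \
        {c' | CoordU prec R F c' ∧ restrict c' (dep prec d) = c}) ∪
      ⋃ i ∈ Finset.range ℓ,
        (fun c' : D → Option ℕ => fun e => if e = d then some i else c' e) ''
          {c' | CoordU prec R F c' ∧ restrict c' (dep prec d) = c} :=
  stmt10_general prec R hR F d hd c hc ℓ
end

section
/- For a complete shape R on (D, ≺) and a linear extension ≺_L of ≺, the canonical expansion R_L uniquely exists: there is exactly one shape R_L on (D, ≺_L) such that every resolution (d, c_L, ℓ) ∈ R_L satisfies (d, c_L|dep(d), ℓ) ∈ R. -/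
open Classical

lemma restrict_restrict' {D : Type} (c : D → Option ℕ) {S T : Set D} (h : T ⊆ S) :
    restrict (restrict c S) T = restrict c T := by
  funext e
  by_cases he : e ∈ T
  · simp [restrict, he, h he]
  · simp [restrict, he]

lemma pdom_restrict' {D : Type} (c : D → Option ℕ) {S : Set D} (h : S ⊆ pdom c) :
    pdom (restrict c S) = S := by
  ext e
  by_cases he : e ∈ S
  · simpa [pdom, restrict, he] using h he
  · simp [pdom, restrict, he]

/-- The canonical expansion of a complete shape relative to a linear extension
uniquely exists. -/
theorem stmt13 {D : Type} [Fintype D] (prec precL : D → D → Prop)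
    [IsIrrefl D prec] [IsTrans D prec] [IsStrictTotalOrder D precL]
    (hext : ∀ a b, prec a b → precL a b)
    (R : D → (D → Option ℕ) → Option ℕ) (hR : IsShape prec R) :
    ∃! RL : D → (D → Option ℕ) → Option ℕ,
      IsShape precL RL ∧
      ∀ d cL ℓ, RL d cL = some ℓ → R d (restrict cL (dep prec d)) = some ℓ := by
  classical
  obtain ⟨hRok, hRib⟩ := hR
  have htrans : ∀ a b c : D, precL a b → precL b c → precL a c :=
    fun a b c hab hbc => IsTrans.trans a b c hab hbc
  have htransP : ∀ a b c : D, prec a b → prec b c → prec a c :=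
    fun a b c hab hbc => IsTrans.trans a b c hab hbc
  -- basic inclusions
  have hsub3 : ∀ d : D, dep prec d ⊆ dep precL d := fun d f hf => hext f d hf
  have hsub1 : ∀ e d : D, precL e d → dep prec e ⊆ dep precL d :=
    fun e d h f hf => htrans f e d (hext f e hf) h
  have hsub2 : ∀ e d : D, precL e d → dep precL e ⊆ dep precL d :=
    fun e d h f hf => htrans f e d hf h
  have hdcP : ∀ d : D, ∀ e ∈ dep prec d, dep prec e ⊆ dep prec d :=
    fun d e he f hf => htransP f e d hf he
  have hdcL : ∀ d : D, ∀ e ∈ dep precL d, dep prec e ⊆ dep precL d :=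
    fun d e he f hf => htrans f e d (hext f e hf) he
  -- ib is preserved under restriction to prec-downward-closed sets
  have hibres : ∀ (c : D → Option ℕ) (S : Set D), (∀ e ∈ S, dep prec e ⊆ S) →
      ib prec R c → ib prec R (restrict c S) := by
    intro c S hdc hib e v hev
    have heS : e ∈ S ∧ c e = some v := by
      by_cases h : e ∈ S
      · exact ⟨h, by simpa [restrict, h] using hev⟩
      · simp [restrict, h] at hev
    obtain ⟨ℓ, h1, h2⟩ := hib e v heS.2
    exact ⟨ℓ, by rwa [restrict_restrict' c (hdc e heS.1)], h2⟩
  -- the candidate canonical expansion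
  set RL : D → (D → Option ℕ) → Option ℕ :=
    fun d cL => if pdom cL = dep precL d ∧ ib prec R cL
      then R d (restrict cL (dep prec d)) else none with hRLdef
  -- if the condition holds, R is defined on the restriction
  have hdefined : ∀ d (cL : D → Option ℕ), pdom cL = dep precL d → ib prec R cL →
      R d (restrict cL (dep prec d)) ≠ none := by
    intro d cL hp hib
    have hps : pdom (restrict cL (dep prec d)) = dep prec d :=
      pdom_restrict' cL (by rw [hp]; exact hsub3 d)
    exact (hRib d _ hps).mpr (hibres cL (dep prec d) (hdcP d) hib)
  have hRLsome : ∀ d (cL : D → Option ℕ), pdom cL = dep precL d → ib prec R cL →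
      RL d cL = R d (restrict cL (dep prec d)) := by
    intro d cL hp hib
    simp only [hRLdef]
    rw [if_pos ⟨hp, hib⟩]
  have hRLnone1 : ∀ d (cL : D → Option ℕ), ¬ (pdom cL = dep precL d ∧ ib prec R cL) →
      RL d cL = none := by
    intro d cL h
    simp only [hRLdef]
    rw [if_neg h]
  -- computing RL at restrictions, assuming ib prec R cL
  have hRLcomp : ∀ d (cL : D → Option ℕ), pdom cL = dep precL d → ib prec R cL →
      ∀ e ∈ dep precL d, RL e (restrict cL (dep precL e)) = R e (restrict cL (dep prec e)) := by
    intro d cL hp hib e he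
    have hps : pdom (restrict cL (dep precL e)) = dep precL e :=
      pdom_restrict' cL (by rw [hp]; exact hsub2 e d he)
    have hibr : ib prec R (restrict cL (dep precL e)) :=
      hibres cL (dep precL e) (hdcL e) hib
    rw [hRLsome e _ hps hibr, restrict_restrict' cL (hsub3 e)]
  -- forward direction of the ib equivalence (for the candidate RL)
  have hfwd : ∀ d (cL : D → Option ℕ), pdom cL = dep precL d → ib prec R cL →
      ib precL RL cL := by
    intro d cL hp hib e v hev
    have he : e ∈ dep precL d := by rw [← hp]; simp [pdom, hev]
    obtain ⟨ℓ, h1, h2⟩ := hib e v hev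
    exact ⟨ℓ, by rw [hRLcomp d cL hp hib e he]; exact h1, h2⟩
  -- reverse direction: any RL' with the projection property induces ib prec R
  have hbwd : ∀ (RL' : D → (D → Option ℕ) → Option ℕ),
      (∀ d cL ℓ, RL' d cL = some ℓ → R d (restrict cL (dep prec d)) = some ℓ) →
      ∀ (cL : D → Option ℕ), ib precL RL' cL → ib prec R cL := by
    intro RL' hP cL hib e v hev
    obtain ⟨ℓ, h1, h2⟩ := hib e v hev
    have := hP e _ ℓ h1
    rw [restrict_restrict' cL (hsub3 e)] at this
    exact ⟨ℓ, this, h2⟩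
  -- projection property of RL
  have hPRL : ∀ d cL ℓ, RL d cL = some ℓ → R d (restrict cL (dep prec d)) = some ℓ := by
    intro d cL ℓ h
    by_cases hc : pdom cL = dep precL d ∧ ib prec R cL
    · rwa [hRLsome d cL hc.1 hc.2] at h
    · rw [hRLnone1 d cL hc] at h; exact absurd h (by simp)
  -- RL is a shape on precL
  have hRLshape : IsShape precL RL := by
    constructor
    · intro d c h
      by_cases hc : pdom c = dep precL d ∧ ib prec R c
      · exact hc.1
      · exact absurd (hRLnone1 d c hc) h
    · intro d cL hp
      constructor
      · intro h
        by_cases hc : pdom cL = dep precL d ∧ ib prec R cL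
        · exact hfwd d cL hc.1 hc.2
        · exact absurd (hRLnone1 d cL hc) h
      · intro hib
        have hibR : ib prec R cL := hbwd RL hPRL cL hib
        rw [hRLsome d cL hp hibR]
        exact hdefined d cL hp hibR
  refine ⟨RL, ⟨hRLshape, hPRL⟩, ?_⟩
  -- uniqueness
  rintro RL' ⟨hS', hP'⟩
  have wf : WellFounded precL := Finite.wellFounded_of_trans_of_irrefl precL
  have main : ∀ d, ∀ c, RL' d c = RL d c := by
    intro d
    induction d using wf.induction with
    | _ d IH =>
      intro c
      by_cases hp : pdom c = dep precL d
      · -- the key equivalence via the inductive hypothesis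
        have hib2 : ib prec R c → ib precL RL' c := by
          intro hib e v hev
          have he : e ∈ dep precL d := by rw [← hp]; simp [pdom, hev]
          obtain ⟨ℓ, h1, h2⟩ := hib e v hev
          refine ⟨ℓ, ?_, h2⟩
          rw [IH e he, hRLcomp d c hp hib e he]
          exact h1
        by_cases hib : ib prec R c
        · -- both are defined with value R d (restrict c (dep prec d))
          have h1 : RL d c = R d (restrict c (dep prec d)) := hRLsome d c hp hib
          have h2 : RL' d c ≠ none := (hS'.2 d c hp).mpr (hib2 hib)
          obtain ⟨ℓ, hℓ⟩ := Option.ne_none_iff_exists'.mp h2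
          rw [hℓ, h1, hP' d c ℓ hℓ]
        · have h1 : RL d c = none := hRLnone1 d c (fun h => hib h.2)
          have h2 : RL' d c = none := by
            by_contra h
            exact hib (hbwd RL' hP' c ((hS'.2 d c hp).mp h))
          rw [h1, h2]
      · have h1 : RL' d c = none := by
          by_contra h; exact hp (hS'.1 d c h)
        have h2 : RL d c = none := hRLnone1 d c (fun h => hp h.1)
        rw [h1, h2]
  funext d c
  exact main d c
end

section
/- The canonical expansion preserves coordinate spaces: for a complete shape R on (D, ≺), a linear extension ≺_L, and a subset F ⊆ D downward closed under both ≺ and ≺_L, the coordinate space of F with respect to the canonical expansion R_L equals the coordinate space of F with respect to R. -/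
open Classical

/-- The canonical expansion preserves coordinate spaces over sets downward closed
under both orders. -/
theorem stmt14 {D : Type} [Fintype D] (prec precL : D → D → Prop)
    [IsIrrefl D prec] [IsTrans D prec] [IsStrictTotalOrder D precL]
    (hext : ∀ a b, prec a b → precL a b)
    (R RL : D → (D → Option ℕ) → Option ℕ)
    (hR : IsShape prec R) (hRL : IsShape precL RL)
    (hcan : ∀ d cL ℓ, RL d cL = some ℓ → R d (restrict cL (dep prec d)) = some ℓ)
    (F : Set D) (hF : DownClosed prec F) (hFL : DownClosed precL F) :
    {c : D → Option ℕ | pdom c = F ∧ ib prec R c} =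
      {c : D → Option ℕ | pdom c = F ∧ ib precL RL c} := by
  have hwf : WellFounded precL := Finite.wellFounded_of_trans_of_irrefl precL
  have hrr : ∀ (c : D → Option ℕ) (S T : Set D), T ⊆ S →
      restrict (restrict c S) T = restrict c T := by
    intro c S T hTS
    funext e
    by_cases h : e ∈ T
    · simp [restrict, h, hTS h]
    · simp [restrict, h]
  ext c
  simp only [Set.mem_setOf_eq]
  constructor
  · rintro ⟨hdom, hib⟩
    refine ⟨hdom, ?_⟩
    have key : ∀ d, d ∈ F → ∀ v, c d = some v →
        ∃ ℓ, RL d (restrict c (dep precL d)) = some ℓ ∧ v < ℓ := by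
      intro d
      induction d using hwf.induction with
      | _ d IH =>
        intro hdF v hcv
        have hpdomL : pdom (restrict c (dep precL d)) = dep precL d := by
          ext e
          simp only [pdom, restrict, Set.mem_setOf_eq]
          constructor
          · intro h
            by_contra he
            simp [he] at h
          · intro he
            have heF : e ∈ F := hFL e d he hdF
            have : c e ≠ none := by
              rw [← hdom] at heF; exact heF
            simp [he, this]
        have hibL : ib precL RL (restrict c (dep precL d)) := by
          intro e w hew
          have hed : e ∈ dep precL d := by
            by_contra h
            simp [restrict, h] at hew
          have hcew : c e = some w := by
            simpa [restrict, hed] using hew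
          have heF : e ∈ F := hFL e d hed hdF
          obtain ⟨ℓ, h1, h2⟩ := IH e hed heF w hcew
          have hsub : dep precL e ⊆ dep precL d := by
            intro x hx
            exact IsTrans.trans x e d hx hed
          rw [hrr c (dep precL d) (dep precL e) hsub]
          exact ⟨ℓ, h1, h2⟩
        have hne : RL d (restrict c (dep precL d)) ≠ none :=
          (hRL.2 d _ hpdomL).mpr hibL
        obtain ⟨ℓ', hℓ'⟩ := Option.ne_none_iff_exists'.mp hne
        have hRd : R d (restrict (restrict c (dep precL d)) (dep prec d)) = some ℓ' :=
          hcan d _ ℓ' hℓ'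
        have hsub : dep prec d ⊆ dep precL d := fun x hx => hext x d hx
        rw [hrr c (dep precL d) (dep prec d) hsub] at hRd
        obtain ⟨ℓ, h1, h2⟩ := hib d v hcv
        rw [h1] at hRd
        have heq : ℓ = ℓ' := Option.some.inj hRd
        exact ⟨ℓ', hℓ', heq ▸ h2⟩
    intro d v hdv
    have hdF : d ∈ F := by
      rw [← hdom]; simp [pdom, hdv]
    exact key d hdF v hdv
  · rintro ⟨hdom, hib⟩
    refine ⟨hdom, ?_⟩
    intro d v hdv
    obtain ⟨ℓ, h1, h2⟩ := hib d v hdv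
    have := hcan d _ ℓ h1
    have hsub : dep prec d ⊆ dep precL d := fun x hx => hext x d hx
    rw [hrr c (dep precL d) (dep prec d) hsub] at this
    exact ⟨ℓ, this, h2⟩
end
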